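/- For the $HLS_3(\pi,\nu,\alpha)$ sequence and for all $n \geq 2$, $u \in \{2,\ldots,n\}$, $m \in \{0,\ldots,n\}$, $z_1 \in \{0,\ldots,n-1\}$, $k_1 \in \{\max\{0, z_1-(u-1)\},\ldots,\min\{z_1,n-u\}\}$ and nonnegative integer $k_2$, the quantity $\sigma(n,u,m,z_1,k_1,k_2) := \sum_{q_1=0}^{u}\sum_{q_2=0}^{u-q_1} (-1)^{q_1} \binom{u}{q_1\ q_2} \binom{k_1+q_1}{m-k_2-q_2}_* \frac{B(\pi+z_1+q_1, \nu+n+u-1-z_1-q_1)}{B(\pi+k_1+q_1, \nu+n-k_1-q_1)}$ equals $0$. -/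

import Mathlib

/-! The inner sum over `q₂` is a Vandermonde convolution, so it collapses to
`C*(k₁ + u, m - k₂)`, independently of `q₁`. Writing `z₁ = k₁ + a` and `u = a + b + 1`, the
Beta ratio at `q₁` is `(x + q₁)_a (y - q₁)_b / (x + y)_(a+b)` with `x = π + k₁`, `y = ν + n - k₁`
(Pochhammer symbols). The arguments of the denominator Beta sum to the constant `x + y`, so the
ratio is a polynomial of degree `< u` in `q₁`, and what remains, its `u`-th finite difference,
vanishes. -/

noncomputable def Beta (x y : ℝ) : ℝ := Real.Gamma x * Real.Gamma y / Real.Gamma (x + y)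

/-- Starred binomial coefficient: `a.choose b` if `0 ≤ b ≤ a`, else `0`. -/
def bstar (a : ℕ) (b : ℤ) : ℕ :=
  if 0 ≤ b ∧ b ≤ (a : ℤ) then a.choose b.toNat else 0

open Finset Polynomial

theorem Polynomial.sum_range_neg_one_pow_mul_choose_mul_eval_eq_zero {R : Type*} [CommRing R]
    {P : R[X]} {n : ℕ} (hP : P.natDegree < n) :
    ∑ k ∈ range (n + 1), (-1) ^ k * (n.choose k : R) * P.eval (k : R) = 0 := by
  have h := congr_fun (fwdDiff_iter_eq_zero_of_degree_lt hP) 0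
  rw [fwdDiff_iter_eq_sum_shift, Pi.zero_apply] at h
  calc ∑ k ∈ range (n + 1), (-1) ^ k * (n.choose k : R) * P.eval (k : R)
      = (-1) ^ n * ∑ k ∈ range (n + 1),
          ((-1 : ℤ) ^ (n - k) * n.choose k) • P.eval (0 + k • 1) := by
        rw [mul_sum]
        refine sum_congr rfl fun k hk => ?_
        have hsplit : (-1 : R) ^ n = (-1) ^ (n - k) * (-1) ^ k := by
          rw [← pow_add, Nat.sub_add_cancel (Nat.lt_succ_iff.mp (mem_range.mp hk))]
        have hsq : (-1 : R) ^ (n - k) * (-1) ^ (n - k) = 1 := by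
          rw [← pow_add, ← two_mul, pow_mul, neg_one_sq, one_pow]
        rw [hsplit, zsmul_eq_mul, nsmul_one, zero_add]
        push_cast
        linear_combination (-(-1 : R) ^ k * n.choose k * P.eval (k : R)) * hsq
    _ = 0 := by rw [h, mul_zero]

theorem Real.Gamma_add_nat_eq_ascPochhammer_eval_mul {x : ℝ} (hx : 0 < x) (a : ℕ) :
    Real.Gamma (x + a) = (ascPochhammer ℝ a).eval x * Real.Gamma x := by
  induction a with
  | zero => simp
  | succ a ih =>
    rw [Nat.cast_succ, ← add_assoc, Real.Gamma_add_one (by positivity), ih,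
      ascPochhammer_succ_eval]
    ring

theorem Beta_add_nat_div_Beta {x y : ℝ} (hx : 0 < x) (hy : 0 < y) (a b : ℕ) :
    Beta (x + a) (y + b) / Beta x y =
      (ascPochhammer ℝ a).eval x * (ascPochhammer ℝ b).eval y /
        (ascPochhammer ℝ (a + b)).eval (x + y) := by
  have hxy : x + a + (y + b) = x + y + (a + b : ℕ) := by push_cast; ring
  have hΓx := Real.Gamma_pos_of_pos hx
  have hΓy := Real.Gamma_pos_of_pos hy
  have hΓxy := Real.Gamma_pos_of_pos (add_pos hx hy)
  have hpoch : 0 < (ascPochhammer ℝ (a + b)).eval (x + y) := ascPochhammer_pos _ _ (add_pos hx hy)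
  unfold Beta
  rw [hxy, Real.Gamma_add_nat_eq_ascPochhammer_eval_mul hx,
    Real.Gamma_add_nat_eq_ascPochhammer_eval_mul hy,
    Real.Gamma_add_nat_eq_ascPochhammer_eval_mul (add_pos hx hy)]
  field_simp

theorem exists_natDegree_le_Beta_shift_ratio_eq_eval (x y : ℝ) (a b : ℕ) :
    ∃ P : ℝ[X], P.natDegree ≤ a + b ∧ ∀ q : ℝ, 0 < x + q → 0 < y - q →
      Beta (x + q + a) (y - q + b) / Beta (x + q) (y - q) = P.eval q := by
  refine ⟨C ((ascPochhammer ℝ (a + b)).eval (x + y))⁻¹ *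
    ((ascPochhammer ℝ a).comp (X + C x) * (ascPochhammer ℝ b).comp (C y - X)), ?_, ?_⟩
  · refine (natDegree_C_mul_le _ _).trans (natDegree_mul_le.trans (add_le_add ?_ ?_)) <;>
    refine natDegree_comp_le.trans ?_
    · rw [ascPochhammer_natDegree, natDegree_X_add_C, mul_one]
    · rw [ascPochhammer_natDegree, natDegree_sub_eq_right_of_natDegree_lt] <;> simp
  · intro q hxq hyq
    rw [Beta_add_nat_div_Beta hxq hyq, add_add_sub_cancel]
    simp only [eval_mul, eval_C, eval_comp, eval_add, eval_sub, eval_X]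
    rw [add_comm q x, div_eq_inv_mul]

theorem bstar_of_neg (a : ℕ) {b : ℤ} (hb : b < 0) : bstar a b = 0 :=
  if_neg fun h => (h.1.trans_lt hb).false

theorem bstar_natCast (a s : ℕ) : bstar a s = a.choose s := by
  unfold bstar
  split_ifs with h
  · rfl
  · exact (Nat.choose_eq_zero_of_lt (by omega)).symm

theorem sum_range_choose_mul_bstar_sub (A B : ℕ) (t : ℤ) :
    ∑ q ∈ range (B + 1), B.choose q * bstar A (t - q) = bstar (A + B) t := by
  rcases lt_or_ge t 0 with ht | ht
  · rw [bstar_of_neg _ ht]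
    exact sum_eq_zero fun q _ => by rw [bstar_of_neg _ (by omega), mul_zero]
  lift t to ℕ using ht with s
  have hext : ∑ q ∈ range (B + 1), B.choose q * bstar A (s - q) =
      ∑ q ∈ range (B + s + 1), B.choose q * bstar A (s - q) :=
    sum_subset (range_subset_range.mpr (by omega)) fun q _ hq => by
      rw [Nat.choose_eq_zero_of_lt (by simp at hq; omega), zero_mul]
  have hvand : (A + B).choose s = ∑ q ∈ range (B + s + 1), B.choose q * bstar A (s - q) := by
    rw [add_comm, Nat.add_choose_eq, Nat.sum_antidiagonal_eq_sum_range_succ_mk]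
    refine sum_subset_zero_on_sdiff (range_subset_range.mpr (by omega)) (fun q hq => ?_)
      fun q hq => ?_
    · rw [mem_sdiff, mem_range, mem_range] at hq
      rw [bstar_of_neg _ (by omega), mul_zero]
    · rw [← Nat.cast_sub (Nat.lt_succ_iff.mp (mem_range.mp hq)), bstar_natCast]
  rw [hext, bstar_natCast, hvand]

theorem sum_sum_choose_mul_choose_mul_bstar {R : Type*} [CommRing R] (u k : ℕ) (t : ℤ)
    (f : ℕ → R) :
    ∑ q1 ∈ range (u + 1), ∑ q2 ∈ range (u - q1 + 1),
        (-1 : R) ^ q1 * ((u.choose q1 * (u - q1).choose q2 : ℕ) : R) *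
          (bstar (k + q1) (t - q2) : R) * f q1 =
      bstar (k + u) t * ∑ q ∈ range (u + 1), (-1) ^ q * (u.choose q : R) * f q := by
  rw [mul_sum]
  refine sum_congr rfl fun q1 hq1 => ?_
  have hvand := sum_range_choose_mul_bstar_sub (k + q1) (u - q1) t
  rw [Nat.add_assoc, Nat.add_sub_cancel' (Nat.lt_succ_iff.mp (mem_range.mp hq1))] at hvand
  rw [← hvand, Nat.cast_sum, sum_mul]
  refine sum_congr rfl fun q2 _ => ?_
  push_cast
  ring

theorem hls3_sigma_vanishes_general (π ν : ℝ) (hπ : 0 < π) (hν : 0 < ν)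
    (n u m z1 k1 k2 : ℕ) (hu : 2 ≤ u) (hun : u ≤ n)
    (hk1a : z1 - (u - 1) ≤ k1) (hk1b : k1 ≤ min z1 (n - u)) :
    ∑ q1 ∈ Finset.range (u + 1), ∑ q2 ∈ Finset.range (u - q1 + 1),
      (-1 : ℝ) ^ q1 * ((u.choose q1 * (u - q1).choose q2 : ℕ) : ℝ) *
        (bstar (k1 + q1) ((m : ℤ) - k2 - q2) : ℝ) *
        (Beta (π + z1 + q1) (ν + n + u - 1 - z1 - q1) /
          Beta (π + k1 + q1) (ν + n - k1 - q1)) = 0 := by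
  obtain ⟨a, rfl⟩ : ∃ a, z1 = k1 + a := ⟨z1 - k1, by omega⟩
  obtain ⟨b, rfl⟩ : ∃ b, u = a + b + 1 := ⟨u - 1 - a, by omega⟩
  obtain ⟨P, hdeg, hP⟩ := exists_natDegree_le_Beta_shift_ratio_eq_eval (π + k1) (ν + n - k1) a b
  rw [sum_sum_choose_mul_choose_mul_bstar]
  refine mul_eq_zero_of_right _ ?_
  rw [← P.sum_range_neg_one_pow_mul_choose_mul_eval_eq_zero (Nat.lt_add_one_of_le hdeg)]
  refine sum_congr rfl fun q hq => ?_
  have hkq : (k1 + q : ℝ) ≤ n := by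
    have := mem_range.mp hq
    exact_mod_cast (by omega : k1 + q ≤ n)
  rw [← hP q (by positivity) (by linarith)]
  congr 3 <;> push_cast <;> ring

/-- The key vanishing result for the `HLS₃(π,ν,α)` sequence: the quantity
`σ(n,u,m,z₁,k₁,k₂) = ∑_{q₁=0}^u ∑_{q₂=0}^{u-q₁} (-1)^{q₁} (u choose q₁ q₂)
C*(k₁+q₁, m-k₂-q₂) B(π+z₁+q₁, ν+n+u-1-z₁-q₁)/B(π+k₁+q₁, ν+n-k₁-q₁)` is zero
for all `n ≥ 2`, `2 ≤ u ≤ n`, `0 ≤ m ≤ n`, `0 ≤ z₁ ≤ n-1`,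
`max(0, z₁-(u-1)) ≤ k₁ ≤ min(z₁, n-u)` and `k₂ ∈ ℕ`. -/
theorem hls3_sigma_vanishes (π ν : ℝ) (hπ : 0 < π) (hν : 0 < ν)
    (n u m z1 k1 k2 : ℕ) (hn : 2 ≤ n) (hu : 2 ≤ u) (hun : u ≤ n) (hm : m ≤ n)
    (hz : z1 ≤ n - 1) (hk1a : z1 - (u - 1) ≤ k1) (hk1b : k1 ≤ min z1 (n - u)) :
    ∑ q1 ∈ Finset.range (u + 1), ∑ q2 ∈ Finset.range (u - q1 + 1),
      (-1 : ℝ) ^ q1 * ((u.choose q1 * (u - q1).choose q2 : ℕ) : ℝ) *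
        (bstar (k1 + q1) ((m : ℤ) - k2 - q2) : ℝ) *
        (Beta (π + z1 + q1) (ν + n + u - 1 - z1 - q1) /
          Beta (π + k1 + q1) (ν + n - k1 - q1)) = 0 :=
  hls3_sigma_vanishes_general π ν hπ hν n u m z1 k1 k2 hu hun hk1a hk1b
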